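/- Let φ_even ∈ ℝ^{n+1} have components (φ_even)_k = √(8/(3(n+2)))·sin²(π(k+1)/(n+2)), k = 0,…,n. Then lim_{n→∞} (n+2)²·(φ_evenᵀ H φ_even) = 4π²/3. Combined with H·φ_odd = 4 sin²(π/(n+2))·φ_odd, this yields lim_{n→∞} (n+2)²·tr(Hρ) = 4π²(1 − l²) for the rank-two state ρ = (3l²/2)·φ_even φ_evenᵀ + (1 − 3l²/2)·φ_odd φ_oddᵀ with fixed l ∈ [1/√2, √(2/3)]. -/
import Mathlib


open Real Matrix Filter Finset

/-- The `(n+1)×(n+1)` tridiagonal matrix `tridiag(-1, 2, -1)`. -/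
noncomputable def Hmat (n : ℕ) : Matrix (Fin (n+1)) (Fin (n+1)) ℝ :=
  Matrix.of fun i j =>
    if i = j then 2 else if ((i : ℤ) - (j : ℤ)).natAbs = 1 then -1 else 0

/-- The even state `(φ_even)_k = √(8/(3(n+2)))·sin²(π(k+1)/(n+2))`. -/
noncomputable def φeven (n : ℕ) : Fin (n+1) → ℝ := fun k =>
  Real.sqrt (8 / (3 * ((n : ℝ) + 2))) * Real.sin (π * ((k : ℝ) + 1) / (n + 2)) ^ 2

/-- The odd state `(φ_odd)_k = √(2/(n+2))·sin(2π(k+1)/(n+2))`. -/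
noncomputable def φodd (n : ℕ) : Fin (n+1) → ℝ := fun k =>
  Real.sqrt (2 / ((n : ℝ) + 2)) * Real.sin (2 * π * ((k : ℝ) + 1) / (n + 2))

/-- The rank-two probe state `ρ = (3l²/2)|φ_even⟩⟨φ_even| + (1−3l²/2)|φ_odd⟩⟨φ_odd|`. -/
noncomputable def ρtwo (n : ℕ) (l : ℝ) : Matrix (Fin (n+1)) (Fin (n+1)) ℝ :=
  (3 * l ^ 2 / 2) • vecMulVec (φeven n) (φeven n)
    + (1 - 3 * l ^ 2 / 2) • vecMulVec (φodd n) (φodd n)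


lemma sum_cos_zero (N m : ℕ) (hm : 0 < m) (hmN : m < N) :
    ∑ k ∈ Finset.range N, Real.cos (2 * π * m * k / N) = 0 := by
  have hN0 : 0 < N := by omega
  have hN : (0:ℝ) < N := by exact_mod_cast hN0
  set ζ : ℂ := Complex.exp ((2 * π * m / N : ℝ) * Complex.I) with hζdef
  have hζ1 : ζ ≠ 1 := by
    rw [hζdef, Ne, Complex.exp_eq_one_iff]
    rintro ⟨j, hj⟩
    have hj2 : ((2 * π * m / N : ℝ) : ℂ) * Complex.I = (((j : ℝ) * (2 * π)) : ℝ) * Complex.I := by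
      rw [hj]; push_cast; ring
    have hr : 2 * π * m / N = (j:ℝ) * (2 * π) := by
      exact_mod_cast mul_right_cancel₀ Complex.I_ne_zero hj2
    rw [div_eq_iff hN.ne'] at hr
    have hr2 : (2*π) * (m:ℝ) = (2*π) * ((j:ℝ)*N) := by linear_combination hr
    have hr3 : (m:ℝ) = (j:ℝ) * N := mul_left_cancel₀ (by positivity) hr2
    have hr4 : (m:ℤ) = j * N := by exact_mod_cast hr3
    have h1 : (0:ℤ) < m := by exact_mod_cast hm
    have h2 : (m:ℤ) < N := by exact_mod_cast hmN
    have h3 : (0:ℤ) < N := by exact_mod_cast hN0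
    rcases le_or_gt j 0 with h | h
    · nlinarith
    · nlinarith
  have hζN : ζ ^ N = 1 := by
    rw [hζdef, ← Complex.exp_nat_mul]
    have : (N:ℂ) * (((2 * π * m / N : ℝ)) * Complex.I) = (m:ℤ) * (2 * ↑π * Complex.I) := by
      have hNC : (N:ℂ) ≠ 0 := Nat.cast_ne_zero.mpr (by omega)
      push_cast
      field_simp
    rw [this, Complex.exp_int_mul_two_pi_mul_I]
  have hgeom : ∑ k ∈ Finset.range N, ζ ^ k = 0 := by
    rw [geom_sum_eq hζ1, hζN, sub_self, zero_div]
  have hre : ∀ k ∈ Finset.range N, Real.cos (2 * π * m * k / N) = (ζ ^ k).re := by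
    intro k _
    rw [hζdef, ← Complex.exp_nat_mul]
    have : (k:ℂ) * (((2 * π * m / N : ℝ)) * Complex.I) = ((2 * π * m * k / N : ℝ)) * Complex.I := by
      push_cast; ring
    rw [this, Complex.exp_ofReal_mul_I_re]
  rw [Finset.sum_congr rfl hre, ← Complex.re_sum, hgeom, Complex.zero_re]

lemma sum_sin_sq (N : ℕ) (hN : 2 ≤ N) :
    ∑ k ∈ Finset.range N, Real.sin (π * k / N) ^ 2 = N / 2 := by
  have h := sum_cos_zero N 1 one_pos (by omega)
  have e : ∀ k ∈ Finset.range N, Real.sin (π * k / N) ^ 2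
      = 1/2 - (1/2) * Real.cos (2 * π * (1:ℕ) * k / N) := by
    intro k _
    rw [Real.sin_sq_eq_half_sub]
    have : 2 * π * ((1:ℕ):ℝ) * k / N = 2 * (π * k / N) := by push_cast; ring
    rw [this]; ring
  rw [Finset.sum_congr rfl e, Finset.sum_sub_distrib, ← Finset.mul_sum, h, mul_zero]
  simp [Finset.card_range]
  ring

lemma sum_sin_pow4 (N : ℕ) (hN : 3 ≤ N) :
    ∑ k ∈ Finset.range N, Real.sin (π * k / N) ^ 4 = 3 * N / 8 := by
  have h1 := sum_cos_zero N 1 one_pos (by omega)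
  have h2 := sum_cos_zero N 2 two_pos (by omega)
  have e : ∀ k ∈ Finset.range N, Real.sin (π * k / N) ^ 4
      = 3/8 - (1/2) * Real.cos (2 * π * (1:ℕ) * k / N) + (1/8) * Real.cos (2 * π * (2:ℕ) * k / N) := by
    intro k _
    set x := π * k / N with hx
    have e1 : 2 * π * ((1:ℕ):ℝ) * k / N = 2 * x := by rw [hx]; push_cast; ring
    have e2 : 2 * π * ((2:ℕ):ℝ) * k / N = 2 * (2 * x) := by rw [hx]; push_cast; ring
    rw [e1, e2, Real.cos_two_mul (2*x), Real.cos_two_mul x]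
    linear_combination (Real.sin x ^ 2 - Real.cos x ^ 2 + 1) * Real.sin_sq_add_cos_sq x
  rw [Finset.sum_congr rfl e]
  rw [Finset.sum_add_distrib, Finset.sum_sub_distrib, ← Finset.mul_sum, ← Finset.mul_sum, h1, h2]
  simp [Finset.card_range]
  ring

lemma sum_sin2_sq (N : ℕ) (hN : 3 ≤ N) :
    ∑ k ∈ Finset.range N, Real.sin (2 * π * k / N) ^ 2 = N / 2 := by
  have h := sum_cos_zero N 2 two_pos (by omega)
  have e : ∀ k ∈ Finset.range N, Real.sin (2 * π * k / N) ^ 2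
      = 1/2 - (1/2) * Real.cos (2 * π * (2:ℕ) * k / N) := by
    intro k _
    rw [Real.sin_sq_eq_half_sub]
    have : 2 * π * ((2:ℕ):ℝ) * k / N = 2 * (2 * π * k / N) := by push_cast; ring
    rw [this]; ring
  rw [Finset.sum_congr rfl e, Finset.sum_sub_distrib, ← Finset.mul_sum, h, mul_zero]
  simp [Finset.card_range]
  ring

lemma hmat_mulVec (n : ℕ) (f : ℕ → ℝ) (hf0 : f 0 = 0) (hfN : f (n+2) = 0) (i : Fin (n+1)) :
    (Hmat n).mulVec (fun j : Fin (n+1) => f ((j:ℕ)+1)) i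
      = 2 * f ((i:ℕ)+1) - f (i:ℕ) - f ((i:ℕ)+2) := by
  have hi := i.isLt
  set g : ℕ → ℝ := fun j => (if (i:ℕ) = j then 2 else
      if ((i:ℤ) - (j:ℤ)).natAbs = 1 then -1 else 0) * f (j+1) with hg
  have key : ∀ j : Fin (n+1), Hmat n i j * f ((j:ℕ)+1) = g (j:ℕ) := by
    intro j
    simp only [Hmat, Matrix.of_apply]
    congr 1
    by_cases h : i = j
    · simp [h, Fin.ext_iff.mp h]
    · have h' : (i:ℕ) ≠ (j:ℕ) := fun hc => h (Fin.ext hc)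
      simp [h, h']
  rw [Matrix.mulVec, dotProduct]
  rw [Finset.sum_congr rfl (fun j _ => key j)]
  rw [Fin.sum_univ_eq_sum_range g (n+1)]
  have hext : ∑ j ∈ Finset.range (n+1), g j = ∑ j ∈ Finset.range (n+3), g j := by
    have g1 : g (n+1) = 0 := by
      rw [hg]; simp only []; rw [hfN]; ring
    have g2 : g (n+2) = 0 := by
      rw [hg]; simp only []
      have h1 : (i:ℕ) ≠ n+2 := by omega
      have h2 : ((i:ℤ) - ((n:ℤ)+2)).natAbs ≠ 1 := by omega
      push_cast
      rw [if_neg h1, if_neg h2]; ring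
    refine Finset.sum_subset (by intro x hx; simp at hx ⊢; omega) ?_
    intro j hj hj'
    simp only [Finset.mem_range] at hj hj'
    have : j = n+1 ∨ j = n+2 := by omega
    rcases this with h | h
    · rw [h]; exact g1
    · rw [h]; exact g2
  rw [hext]
  have hdecomp : ∀ j : ℕ, g j = 2 * (if (i:ℕ) = j then f (j+1) else 0)
      - (if (i:ℕ)+1 = j then f (j+1) else 0) - (if (i:ℕ) = j+1 then f (j+1) else 0) := by
    intro j
    rw [hg]; simp only []
    by_cases h1 : (i:ℕ) = j
    · have h2 : (i:ℕ)+1 ≠ j := by omega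
      have h3 : (i:ℕ) ≠ j+1 := by omega
      rw [if_pos h1, if_pos h1, if_neg h2, if_neg h3]; ring
    · rw [if_neg h1]
      by_cases h2 : (i:ℕ)+1 = j
      · have hab : ((i:ℤ) - (j:ℤ)).natAbs = 1 := by omega
        have h3 : (i:ℕ) ≠ j+1 := by omega
        rw [if_pos hab, if_neg h1, if_pos h2, if_neg h3]; ring
      · by_cases h3 : (i:ℕ) = j+1
        · have hab : ((i:ℤ) - (j:ℤ)).natAbs = 1 := by omega
          rw [if_pos hab, if_neg h1, if_neg h2, if_pos h3]; ring
        · have hab : ((i:ℤ) - (j:ℤ)).natAbs ≠ 1 := by omega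
          rw [if_neg hab, if_neg h1, if_neg h2, if_neg h3]; ring
  rw [Finset.sum_congr rfl (fun j _ => hdecomp j)]
  rw [Finset.sum_sub_distrib, Finset.sum_sub_distrib, ← Finset.mul_sum]
  rw [Finset.sum_ite_eq (Finset.range (n+3)) (i:ℕ) (fun j => f (j+1)),
      Finset.sum_ite_eq (Finset.range (n+3)) ((i:ℕ)+1) (fun j => f (j+1))]
  have hlast : ∑ j ∈ Finset.range (n+3), (if (i:ℕ) = j+1 then f (j+1) else 0) = f (i:ℕ) := by
    rcases Nat.eq_zero_or_pos (i:ℕ) with h | h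
    · rw [h, hf0]
      apply Finset.sum_eq_zero
      intro j _
      rw [if_neg (by omega)]
    · obtain ⟨i', hi'⟩ := Nat.exists_eq_succ_of_ne_zero (by omega : (i:ℕ) ≠ 0)
      rw [hi']
      have e : ∀ j ∈ Finset.range (n+3), (if i'+1 = j+1 then f (j+1) else 0)
          = (if i' = j then f (j+1) else 0) := by
        intro j _
        by_cases h' : i' = j
        · rw [if_pos h', if_pos (by omega)]
        · rw [if_neg h', if_neg (by omega)]
      rw [Finset.sum_congr rfl e, Finset.sum_ite_eq (Finset.range (n+3)) i' (fun j => f (j+1)),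
        if_pos (by simp; omega)]
  rw [hlast, if_pos (by simp; omega), if_pos (by simp; omega)]
  rw [show (i:ℕ)+1+1 = (i:ℕ)+2 from by omega]
  ring

lemma trig_even (a b : ℝ) :
    2 * Real.sin a ^ 2 - Real.sin (a-b) ^ 2 - Real.sin (a+b) ^ 2
      = 2 * Real.sin b ^ 2 * (2 * Real.sin a ^ 2 - 1) := by
  rw [Real.sin_sub, Real.sin_add]
  linear_combination (-2*Real.sin b^2) * Real.sin_sq_add_cos_sq a
    + (-2*Real.sin a^2) * Real.sin_sq_add_cos_sq b

lemma trig_odd (a b : ℝ) :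
    2 * Real.sin a - Real.sin (a-b) - Real.sin (a+b) = 2 * Real.sin a * (1 - Real.cos b) := by
  rw [Real.sin_sub, Real.sin_add]; ring

lemma trace_form (n : ℕ) (A : Matrix (Fin (n+1)) (Fin (n+1)) ℝ) (v : Fin (n+1) → ℝ) :
    (A * vecMulVec v v).trace = v ⬝ᵥ A.mulVec v := by
  rw [Matrix.trace]
  simp only [Matrix.diag, Matrix.mul_apply, vecMulVec_apply, dotProduct, Matrix.mulVec]
  refine Finset.sum_congr rfl fun i _ => ?_
  rw [Finset.mul_sum]
  exact Finset.sum_congr rfl fun j _ => by ring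

lemma quad_even (n : ℕ) (hn : 1 ≤ n) :
    φeven n ⬝ᵥ (Hmat n).mulVec (φeven n) = 4/3 * Real.sin (π/((n:ℝ)+2)) ^ 2 := by
  have hNpos : (0:ℝ) < (n:ℝ)+2 := by positivity
  have hN : ((n:ℝ)+2) ≠ 0 := ne_of_gt hNpos
  set c : ℝ := Real.sqrt (8/(3*((n:ℝ)+2))) with hc
  have hc2 : c^2 = 8/(3*((n:ℝ)+2)) := Real.sq_sqrt (by positivity)
  set f : ℕ → ℝ := fun k => c * Real.sin (π * k / ((n:ℝ)+2)) ^ 2 with hf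
  have hf0 : f 0 = 0 := by simp [hf]
  have hfN : f (n+2) = 0 := by
    simp only [hf]
    have e : π * ((n+2 : ℕ) : ℝ) / ((n:ℝ)+2) = π := by push_cast; field_simp
    rw [e, Real.sin_pi]
    ring
  have hφ : φeven n = fun k : Fin (n+1) => f ((k:ℕ)+1) := by
    funext k
    simp only [φeven, hf]
    have e : π * (((k:ℕ)+1 : ℕ) : ℝ) / ((n:ℝ)+2) = π * ((k:ℝ)+1) / ((n:ℝ)+2) := by
      push_cast; ring
    rw [e]
  have key : φeven n ⬝ᵥ (Hmat n).mulVec (φeven n)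
      = ∑ i : Fin (n+1), f ((i:ℕ)+1) * (2 * f ((i:ℕ)+1) - f (i:ℕ) - f ((i:ℕ)+2)) := by
    rw [hφ, dotProduct]
    exact Finset.sum_congr rfl fun i _ => by rw [hmat_mulVec n f hf0 hfN i]
  rw [key]
  set G : ℕ → ℝ := fun k => 2 * c^2 * Real.sin (π/((n:ℝ)+2))^2 *
      (2 * Real.sin (π * k / ((n:ℝ)+2))^4 - Real.sin (π * k / ((n:ℝ)+2))^2) with hG
  have hpt : ∀ i : Fin (n+1),
      f ((i:ℕ)+1) * (2 * f ((i:ℕ)+1) - f (i:ℕ) - f ((i:ℕ)+2)) = G ((i:ℕ)+1) := by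
    intro i
    simp only [hf, hG]
    set a : ℝ := π * (((i:ℕ)+1 : ℕ) : ℝ) / ((n:ℝ)+2) with ha
    have e1 : π * ((i:ℕ) : ℝ) / ((n:ℝ)+2) = a - π/((n:ℝ)+2) := by
      rw [ha]; push_cast; field_simp; ring
    have e2 : π * (((i:ℕ)+2 : ℕ) : ℝ) / ((n:ℝ)+2) = a + π/((n:ℝ)+2) := by
      rw [ha]; push_cast; field_simp; ring
    rw [e1, e2]
    linear_combination (c^2 * Real.sin a^2) * trig_even a (π/((n:ℝ)+2))
  rw [Finset.sum_congr rfl fun i _ => hpt i]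
  rw [Fin.sum_univ_eq_sum_range (fun k => G (k+1)) (n+1)]
  have hshift : ∑ k ∈ Finset.range (n+1), G (k+1) = ∑ k ∈ Finset.range (n+2), G k := by
    rw [Finset.sum_range_succ' G (n+1)]
    have : G 0 = 0 := by simp [hG]
    rw [this, add_zero]
  rw [hshift]
  have hsplit : ∑ k ∈ Finset.range (n+2), G k
      = 2 * c^2 * Real.sin (π/((n:ℝ)+2))^2 *
        (2 * (∑ k ∈ Finset.range (n+2), Real.sin (π * k / ((n:ℝ)+2))^4)
          - ∑ k ∈ Finset.range (n+2), Real.sin (π * k / ((n:ℝ)+2))^2) := by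
    rw [← Finset.mul_sum, Finset.sum_sub_distrib, ← Finset.mul_sum]
  have S2 : ∑ k ∈ Finset.range (n+2), Real.sin (π * k / ((n:ℝ)+2))^2 = ((n:ℝ)+2)/2 := by
    have h := sum_sin_sq (n+2) (by omega)
    push_cast at h ⊢
    exact h
  have S4 : ∑ k ∈ Finset.range (n+2), Real.sin (π * k / ((n:ℝ)+2))^4 = 3*((n:ℝ)+2)/8 := by
    have h := sum_sin_pow4 (n+2) (by omega)
    push_cast at h ⊢
    exact h
  rw [hsplit, S2, S4, hc2]
  field_simp
  ring

lemma quad_odd (n : ℕ) (hn : 1 ≤ n) :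
    φodd n ⬝ᵥ (Hmat n).mulVec (φodd n) = 4 * Real.sin (π/((n:ℝ)+2)) ^ 2 := by
  have hNpos : (0:ℝ) < (n:ℝ)+2 := by positivity
  have hN : ((n:ℝ)+2) ≠ 0 := ne_of_gt hNpos
  set d : ℝ := Real.sqrt (2/((n:ℝ)+2)) with hd
  have hd2 : d^2 = 2/((n:ℝ)+2) := Real.sq_sqrt (by positivity)
  set f : ℕ → ℝ := fun k => d * Real.sin (2 * π * k / ((n:ℝ)+2)) with hf
  have hf0 : f 0 = 0 := by simp [hf]
  have hfN : f (n+2) = 0 := by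
    simp only [hf]
    have e : 2 * π * ((n+2 : ℕ) : ℝ) / ((n:ℝ)+2) = 2 * π := by push_cast; field_simp
    rw [e]
    simp [Real.sin_two_pi]
  have hφ : φodd n = fun k : Fin (n+1) => f ((k:ℕ)+1) := by
    funext k
    simp only [φodd, hf]
    have e : 2 * π * (((k:ℕ)+1 : ℕ) : ℝ) / ((n:ℝ)+2) = 2 * π * ((k:ℝ)+1) / ((n:ℝ)+2) := by
      push_cast; ring
    rw [e]
  have key : φodd n ⬝ᵥ (Hmat n).mulVec (φodd n)
      = ∑ i : Fin (n+1), f ((i:ℕ)+1) * (2 * f ((i:ℕ)+1) - f (i:ℕ) - f ((i:ℕ)+2)) := by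
    rw [hφ, dotProduct]
    exact Finset.sum_congr rfl fun i _ => by rw [hmat_mulVec n f hf0 hfN i]
  rw [key]
  set G : ℕ → ℝ := fun k => 2 * d^2 * (1 - Real.cos (2*π/((n:ℝ)+2))) *
      Real.sin (2 * π * k / ((n:ℝ)+2))^2 with hG
  have hpt : ∀ i : Fin (n+1),
      f ((i:ℕ)+1) * (2 * f ((i:ℕ)+1) - f (i:ℕ) - f ((i:ℕ)+2)) = G ((i:ℕ)+1) := by
    intro i
    simp only [hf, hG]
    set a : ℝ := 2 * π * (((i:ℕ)+1 : ℕ) : ℝ) / ((n:ℝ)+2) with ha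
    have e1 : 2 * π * ((i:ℕ) : ℝ) / ((n:ℝ)+2) = a - 2*π/((n:ℝ)+2) := by
      rw [ha]; push_cast; field_simp; ring
    have e2 : 2 * π * (((i:ℕ)+2 : ℕ) : ℝ) / ((n:ℝ)+2) = a + 2*π/((n:ℝ)+2) := by
      rw [ha]; push_cast; field_simp; ring
    rw [e1, e2]
    linear_combination (d^2 * Real.sin a) * trig_odd a (2*π/((n:ℝ)+2))
  rw [Finset.sum_congr rfl fun i _ => hpt i]
  rw [Fin.sum_univ_eq_sum_range (fun k => G (k+1)) (n+1)]
  have hshift : ∑ k ∈ Finset.range (n+1), G (k+1) = ∑ k ∈ Finset.range (n+2), G k := by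
    rw [Finset.sum_range_succ' G (n+1)]
    have : G 0 = 0 := by simp [hG]
    rw [this, add_zero]
  rw [hshift]
  have hsplit : ∑ k ∈ Finset.range (n+2), G k
      = 2 * d^2 * (1 - Real.cos (2*π/((n:ℝ)+2))) *
        ∑ k ∈ Finset.range (n+2), Real.sin (2 * π * k / ((n:ℝ)+2))^2 := by
    rw [← Finset.mul_sum]
  have S2 : ∑ k ∈ Finset.range (n+2), Real.sin (2 * π * k / ((n:ℝ)+2))^2 = ((n:ℝ)+2)/2 := by
    have h := sum_sin2_sq (n+2) (by omega)
    push_cast at h ⊢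
    exact h
  have hcos : 1 - Real.cos (2*π/((n:ℝ)+2)) = 2 * Real.sin (π/((n:ℝ)+2))^2 := by
    have h := Real.sin_sq_eq_half_sub (π/((n:ℝ)+2))
    have e : 2 * (π/((n:ℝ)+2)) = 2*π/((n:ℝ)+2) := by ring
    rw [e] at h
    linarith
  rw [hsplit, S2, hcos, hd2]
  field_simp
  ring

lemma tendsto_nsin :
    Tendsto (fun n : ℕ => ((n:ℝ)+2) * Real.sin (π/((n:ℝ)+2))) atTop (nhds π) := by
  have h1 : Tendsto (fun n : ℕ => π/((n:ℝ)+2)) atTop (nhds 0) :=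
    Tendsto.div_atTop tendsto_const_nhds
      (tendsto_atTop_add_const_right _ 2 tendsto_natCast_atTop_atTop)
  have hslope : Tendsto (fun x : ℝ => Real.sin x / x) (nhdsWithin 0 {(0:ℝ)}ᶜ) (nhds 1) := by
    have hd := Real.hasDerivAt_sin 0
    rw [Real.cos_zero] at hd
    have := hasDerivAt_iff_tendsto_slope.mp hd
    refine this.congr fun x => ?_
    simp [slope, Real.sin_zero]
    rw [inv_mul_eq_div]
  have h1' : Tendsto (fun n : ℕ => π/((n:ℝ)+2)) atTop (nhdsWithin 0 {(0:ℝ)}ᶜ) := by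
    refine tendsto_nhdsWithin_of_tendsto_nhds_of_eventually_within _ h1 ?_
    refine Eventually.of_forall fun n => ?_
    simp only [Set.mem_compl_iff, Set.mem_singleton_iff]
    positivity
  have h3 := hslope.comp h1'
  have h4 := h3.const_mul π
  rw [mul_one] at h4
  refine h4.congr fun n => ?_
  have hN : ((n:ℝ)+2) ≠ 0 := by positivity
  have hπ : π ≠ 0 := Real.pi_ne_zero
  simp only [Function.comp]
  field_simp

/-- `lim (n+2)² φ_evenᵀHφ_even = 4π²/3` and, for the rank-two state with fixed
`l ∈ [1/√2, √(2/3)]`, `lim (n+2)² tr(Hρ) = 4π²(1−l²)`. -/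
theorem rank_two_state_variance_asymptotics (l : ℝ)
    (hl : l ∈ Set.Icc (1 / Real.sqrt 2) (Real.sqrt (2 / 3))) :
    Tendsto (fun n : ℕ =>
        ((n : ℝ) + 2) ^ 2 * (φeven n ⬝ᵥ (Hmat n).mulVec (φeven n)))
      atTop (nhds (4 * π ^ 2 / 3)) ∧
    Tendsto (fun n : ℕ =>
        ((n : ℝ) + 2) ^ 2 * (Hmat n * ρtwo n l).trace)
      atTop (nhds (4 * π ^ 2 * (1 - l ^ 2))) := by
  have hbase : Tendsto (fun n : ℕ => (((n:ℝ)+2) * Real.sin (π/((n:ℝ)+2)))^2)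
      atTop (nhds (π^2)) := tendsto_nsin.pow 2
  constructor
  · have h := hbase.const_mul (4/3 : ℝ)
    have e : (4/3 : ℝ) * π^2 = 4 * π^2 / 3 := by ring
    rw [e] at h
    refine h.congr' ?_
    filter_upwards [eventually_ge_atTop 1] with n hn
    rw [quad_even n hn]
    ring
  · have h := hbase.const_mul (4 * (1 - l^2) : ℝ)
    have e : (4 * (1 - l^2) : ℝ) * π^2 = 4 * π^2 * (1 - l^2) := by ring
    rw [e] at h
    refine h.congr' ?_
    filter_upwards [eventually_ge_atTop 1] with n hn
    have htr : (Hmat n * ρtwo n l).trace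
        = (3 * l^2 / 2) * (φeven n ⬝ᵥ (Hmat n).mulVec (φeven n))
          + (1 - 3 * l^2 / 2) * (φodd n ⬝ᵥ (Hmat n).mulVec (φodd n)) := by
      rw [ρtwo, Matrix.mul_add, Matrix.mul_smul, Matrix.mul_smul, Matrix.trace_add,
        Matrix.trace_smul, Matrix.trace_smul, trace_form, trace_form]
      simp [smul_eq_mul]
    rw [htr, quad_even n hn, quad_odd n hn]
    ring
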